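/- For any scattered space (X, τ) and any ordinal Θ ≥ ρX, the rank function ρ_τ : X → Θ is the unique d-map from (X, τ) to Θ_0, the ordinal Θ equipped with the left topology. -/

import Mathlib

open Ordinal Set

noncomputable section

universe u

/-! ## Basic topological notions (explicit topologies) -/

/-- The derived set (set of limit points) of `A` w.r.t. the topology `t`. -/
def dSet {X : Type u} (t : TopologicalSpace X) (A : Set X) : Set X :=
  {x | ∀ U : Set X, t.IsOpen U → x ∈ U → ∃ y, y ∈ U ∩ A ∧ y ≠ x}

/-- Transfinite iterates of the derived-set operator, starting from the whole space. -/
def dIter {X : Type u} (t : TopologicalSpace X) (o : Ordinal.{u}) : Set X :=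
  Ordinal.limitRecOn o Set.univ (fun _ ih => dSet t ih)
    (fun o _ ih => ⋂ (o' : Ordinal.{u}) (h : o' < o), ih o' h)

/-- The Cantor–Bendixson rank of a point: the least `ξ` with `x ∉ d^{ξ+1} X`. -/
def ptRank {X : Type u} (t : TopologicalSpace X) (x : X) : Ordinal.{u} :=
  sInf {ξ : Ordinal.{u} | x ∉ dIter t (ξ + 1)}

/-- The rank of a space: `sup_{x ∈ X} (ρ(x) + 1)`. -/
def spRank (X : Type u) (t : TopologicalSpace X) : Ordinal.{u} :=
  ⨆ x : X, ptRank t x + 1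

/-- A space is scattered if every nonempty subset has an isolated point. -/
def IsScattered {X : Type u} (t : TopologicalSpace X) : Prop :=
  ∀ A : Set X, A.Nonempty → ∃ x ∈ A, ∃ U : Set X, t.IsOpen U ∧ U ∩ A = {x}

/-- A `d`-map: continuous, open and pointwise discrete. -/
def IsDMap {X : Type u} {Y : Type*} (t : TopologicalSpace X) (s : TopologicalSpace Y)
    (f : X → Y) : Prop :=
  @Continuous _ _ t s f ∧ @IsOpenMap _ _ t s f ∧
    ∀ y : Y, ∀ x : X, f x = y →
      ∃ U : Set X, t.IsOpen U ∧ x ∈ U ∧ ∀ z ∈ U, f z = y → z = x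

/-! ## Hyperexponentials and hyperlogarithms -/

/-- The exponential `e ξ = -1 + ω^ξ`. -/
def eFun (x : Ordinal.{u}) : Ordinal.{u} := ω ^ x - 1

/-- A normal ordinal function (the older Mathlib `Ordinal.IsNormal`, restated). -/
def Ordinal.IsNormal (f : Ordinal.{u} → Ordinal.{u}) : Prop :=
  (∀ o, f o < f (Order.succ o)) ∧
    ∀ o, Order.IsSuccLimit o → ∀ a, f o ≤ a ↔ ∀ b < o, f b ≤ a

/-- `E` is the family of hyperexponentials: a family of normal functions with `E 1 = e`,
`E (α+β) = E α ∘ E β`, pointwise minimal among all such families. -/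
def IsHyperexpFamily (E : Ordinal.{u} → Ordinal.{u} → Ordinal.{u}) : Prop :=
  (∀ a, Ordinal.IsNormal (E a)) ∧ E 1 = eFun ∧ (∀ a b, E (a + b) = E a ∘ E b) ∧
    ∀ F : Ordinal.{u} → Ordinal.{u} → Ordinal.{u},
      (∀ a, Ordinal.IsNormal (F a)) → F 1 = eFun → (∀ a b, F (a + b) = F a ∘ F b) →
        ∀ a b, E a b ≤ F a b

/-- The end logarithm: `ℓ 0 = 0` and `ℓ ξ` is the unique `β` with `ξ = α + ω^β`. -/
def ellFun (x : Ordinal.{u}) : Ordinal.{u} :=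
  if x = 0 then 0 else sInf {b : Ordinal.{u} | ∃ a, x = a + ω ^ b}

/-- An initial function maps initial segments onto initial segments. -/
def IsInitialFun (f : Ordinal.{u} → Ordinal.{u}) : Prop :=
  ∀ o : Ordinal.{u}, ∃ o' : Ordinal.{u}, f '' Set.Iio o = Set.Iio o'

/-- `L` is the family of hyperlogarithms: a family of initial functions with `L 1 = ℓ`,
`L (α+β) = L β ∘ L α`, pointwise maximal among all such families. -/
def IsHyperlogFamily (L : Ordinal.{u} → Ordinal.{u} → Ordinal.{u}) : Prop :=
  (∀ a, IsInitialFun (L a)) ∧ L 1 = ellFun ∧ (∀ a b, L (a + b) = L b ∘ L a) ∧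
    ∀ M : Ordinal.{u} → Ordinal.{u} → Ordinal.{u},
      (∀ a, IsInitialFun (M a)) → M 1 = ellFun → (∀ a b, M (a + b) = M b ∘ M a) →
        ∀ a b, M a b ≤ L a b

/-! ## Icard topologies -/

/-- The generalized Icard topology `τ_λ` based on a space `(X, t)`, relative to a family `L`
of hyperlogarithms: the least topology containing `t` and all sets
`(α, β]_ξ = {x | α < ℓ^ξ ρ_t(x) ≤ β}` (including `α = -1`, i.e. `[0, β]_ξ`), for `ξ < λ`. -/
def IcardTop {X : Type u} (L : Ordinal.{u} → Ordinal.{u} → Ordinal.{u})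
    (t : TopologicalSpace X) (lam : Ordinal.{u}) : TopologicalSpace X :=
  t ⊓ TopologicalSpace.generateFrom
    {S : Set X | ∃ ξ < lam,
      (∃ b : Ordinal.{u}, S = {x | L ξ (ptRank t x) ≤ b}) ∨
      (∃ a b : Ordinal.{u}, a < b ∧ S = {x | a < L ξ (ptRank t x) ∧ L ξ (ptRank t x) ≤ b})}

/-! ## Ordinal spaces -/

/-- The ordinal corresponding to a point of `Θ.ToType`. -/
def ordVal {Θ : Ordinal.{u}} (x : Θ.ToType) : Ordinal.{u} :=
  @Ordinal.typein Θ.ToType (· < ·) isWellOrder_lt x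

/-- The left topology `I₀` on (the canonical type of order type) `Θ`, generated by the
intervals `[0, β]`. -/
def leftTop (Θ : Ordinal.{u}) : TopologicalSpace Θ.ToType :=
  TopologicalSpace.generateFrom {S : Set Θ.ToType | ∃ b : Θ.ToType, S = Set.Iic b}

/-- The interval topology `I₁` on `Θ`, generated by the sets `[0, β]` and `(α, β]`. -/
def intervalTop (Θ : Ordinal.{u}) : TopologicalSpace Θ.ToType :=
  TopologicalSpace.generateFrom
    {S : Set Θ.ToType | (∃ b, S = Set.Iic b) ∨ ∃ a b : Θ.ToType, S = Set.Ioc a b}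

/-- The Icard topology `I_λ = (I₀)_λ` on the ordinal `Θ`: the least topology containing the
left topology and all sets `{x < Θ | α < ℓ^ξ x ≤ β}` for `ξ < λ`. -/
def ordIcard (L : Ordinal.{u} → Ordinal.{u} → Ordinal.{u}) (Θ lam : Ordinal.{u}) :
    TopologicalSpace Θ.ToType :=
  leftTop Θ ⊓ TopologicalSpace.generateFrom
    {S : Set Θ.ToType | ∃ ξ < lam,
      (∃ b : Ordinal.{u}, S = {x | L ξ (ordVal x) ≤ b}) ∨
      (∃ a b : Ordinal.{u}, a < b ∧ S = {x | a < L ξ (ordVal x) ∧ L ξ (ordVal x) ≤ b})}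

/-! ## Modal logic: GL and topological (d-)semantics -/

/-- Formulas of the basic modal language. -/
inductive Fml : Type
  | bot : Fml
  | var : ℕ → Fml
  | imp : Fml → Fml → Fml
  | box : Fml → Fml

namespace Fml

/-- Negation. -/
def neg (p : Fml) : Fml := p.imp .bot

/-- Diamond. -/
def dia (p : Fml) : Fml := (p.neg.box).neg

end Fml

/-- The valuation determined by an assignment `V` of sets to propositional variables, in the
`d`-semantics: `⟦◇φ⟧ = d⟦φ⟧`, i.e. `⟦◻φ⟧` is the complement of the derived set of the
complement of `⟦φ⟧`. -/
def fval {X : Type u} (t : TopologicalSpace X) (V : ℕ → Set X) : Fml → Set X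
  | .bot => ∅
  | .var n => V n
  | .imp p q => (fval t V p)ᶜ ∪ fval t V q
  | .box p => (dSet t (fval t V p)ᶜ)ᶜ

/-- Classical tautologies (boxed formulas and variables treated as atoms). -/
def Tautology (φ : Fml) : Prop :=
  ∀ v : Fml → Bool, v .bot = false → (∀ p q : Fml, v (p.imp q) = (!(v p) || v q)) →
    v φ = true

/-- Provability in the Gödel–Löb provability logic `GL`. -/
inductive GLProv : Fml → Prop
  | taut {φ : Fml} : Tautology φ → GLProv φ
  | axK (p q : Fml) : GLProv (((p.imp q).box).imp ((p.box).imp q.box))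
  | axLob (p : Fml) : GLProv ((((p.box).imp p).box).imp p.box)
  | mp {p q : Fml} : GLProv (p.imp q) → GLProv p → GLProv q
  | nec {p : Fml} : GLProv p → GLProv p.box

/-- A set of formulas is GL-consistent if no finite conjunction of its members provably
implies `⊥`. -/
def GLConsistent (Γ : Set Fml) : Prop :=
  ¬ ∃ l : List Fml, (∀ φ ∈ l, φ ∈ Γ) ∧ GLProv (l.foldr .imp .bot)

/-- `Γ` is satisfied in the space `(X, t)`. -/
def SatisfiedIn {X : Type u} (t : TopologicalSpace X) (Γ : Set Fml) : Prop :=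
  ∃ (V : ℕ → Set X) (x : X), ∀ φ ∈ Γ, x ∈ fval t V φ

/-- `GL` is strongly complete with respect to `(X, t)`. -/
def StronglyCompleteFor {X : Type u} (t : TopologicalSpace X) : Prop :=
  ∀ Γ : Set Fml, GLConsistent Γ → SatisfiedIn t Γ

/-- Validity of a formula in a space under the `d`-semantics. -/
def ValidIn {X : Type u} (t : TopologicalSpace X) (φ : Fml) : Prop :=
  ∀ V : ℕ → Set X, fval t V φ = Set.univ

/-! ## Trees and ω-bouquets -/

/-- The upset topology of a relation: opens are the `R`-upward closed sets. -/
def upTop {T : Type u} (R : T → T → Prop) : TopologicalSpace T where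
  IsOpen U := ∀ x ∈ U, ∀ y, R x y → y ∈ U
  isOpen_univ := fun x _ y _ => trivial
  isOpen_inter := fun s t hs ht x hx y hR => ⟨hs x hx.1 y hR, ht x hx.2 y hR⟩
  isOpen_sUnion := fun S hS x hx y hR => by
    obtain ⟨s, hsS, hxs⟩ := hx
    exact ⟨s, hsS, hS s hsS x hxs y hR⟩

/-- A countable, converse well-founded tree. -/
structure IsOmegaTree {T : Type u} (R : T → T → Prop) : Prop where
  countable : Countable T
  trans : ∀ a b c, R a b → R b c → R a c
  irrefl : ∀ a, ¬ R a a
  predWellOrdered : ∀ t : T, IsWellOrder {s : T // R s t} (fun a b => R a.1 b.1)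
  root : ∃! r : T, ∀ s : T, ¬ R s r
  converseWellFounded : WellFounded (fun a b : T => R b a)

/-- The daughters (immediate successors) of a node. -/
def daughters {T : Type u} (R : T → T → Prop) (w : T) : Set T :=
  {v | R w v ∧ ¬ ∃ u, R w u ∧ R u v}

/-- The bouquet topology `σ_R`: the least topology extending the upset topology such that
whenever `w` has limit rank, `(v_i)` enumerates the daughters of `w` without repetition and
`n < ω`, the set `{w} ∪ ⋃_{i > n} ({v_i} ∪ R(v_i))` is open. -/
def sigmaTop {T : Type u} (R : T → T → Prop) : TopologicalSpace T :=
  upTop R ⊓ TopologicalSpace.generateFrom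
    {S : Set T | ∃ w : T, Order.IsSuccLimit (ptRank (upTop R) w) ∧
      ∃ v : ℕ → T, Function.Injective v ∧ Set.range v = daughters R w ∧
        ∃ n : ℕ, S = {w} ∪ ⋃ (i : ℕ) (_ : n < i), ({v i} ∪ {u | R (v i) u})}

/-! ## The club topology (via its neighborhood characterization) -/

/-- `C` is a club in (i.e. a closed unbounded subset of) the point `x`. -/
def IsClubIn {Θ : Ordinal.{u}} (C : Set Θ.ToType) (x : Θ.ToType) : Prop :=
  (∀ y ∈ C, y < x) ∧ (∀ z, z < x → ∃ y ∈ C, z < y) ∧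
    ∀ z, z < x → (∃ w, w < z) → (∀ w, w < z → ∃ y ∈ C, w < y ∧ y < z) → z ∈ C

/-- `t` is the club topology on `Θ`: a set `U` is a neighborhood of a point `x ∈ U` iff
`U` contains a club in `x` or `cf(x) < ℵ₁`. -/
def IsClubTop (Θ : Ordinal.{u}) (t : TopologicalSpace Θ.ToType) : Prop :=
  ∀ (U : Set Θ.ToType) (x : Θ.ToType), x ∈ U →
    (U ∈ @nhds _ t x ↔
      (Ordinal.cof (ordVal x) < Cardinal.aleph 1 ∨ ∃ C ⊆ U, IsClubIn C x))

/-! A d-map pulls derived sets back to derived sets, hence preserves every Cantor–Bendixson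
level `d^ξ` and with it the rank. In `Θ₀` the level `d^ξ` is `[ξ, Θ)`, so the rank of `β` is `β`
itself, and every d-map `X → Θ₀` is the rank function. Conversely, in a scattered space the rank
function is a d-map into `Θ₀`: the points of rank `≤ α` form an open set, every neighbourhood of a
point of rank `α` contains points of every smaller rank, and each point is isolated in its own
level. -/

open Topology

section CantorBendixson

variable {X : Type u} [t : TopologicalSpace X]

theorem notMem_dSet_iff {A : Set X} {x : X} :
    x ∉ dSet t A ↔ ∃ U, IsOpen U ∧ x ∈ U ∧ ∀ y ∈ U, y ∈ A → y = x := by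
  simp only [dSet, mem_ofPred_eq, not_forall, not_exists, not_and, not_not]
  exact ⟨fun ⟨U, hU, hxU, h⟩ => ⟨U, hU, hxU, fun y hyU hyA => h y ⟨hyU, hyA⟩⟩,
    fun ⟨U, hU, hxU, h⟩ => ⟨U, hU, hxU, fun y hy => h y hy.1 hy.2⟩⟩

theorem dSet_subset_of_isClosed {A : Set X} (hA : IsClosed A) : dSet t A ⊆ A := fun x hx =>
  by_contra fun hxA => by
    obtain ⟨y, ⟨hyA, hy⟩, -⟩ := hx Aᶜ hA.isOpen_compl hxA
    exact hyA hy

theorem isClosed_dSet {A : Set X} (hA : IsClosed A) : IsClosed (dSet t A) := by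
  refine isOpen_compl_iff.mp (isOpen_iff_forall_mem_open.mpr fun x hx => ?_)
  obtain ⟨U, hU, hxU, hUA⟩ := notMem_dSet_iff.mp hx
  refine ⟨U, fun y hyU hy => ?_, hU, hxU⟩
  obtain rfl := hUA y hyU (dSet_subset_of_isClosed hA hy)
  exact hx hy

@[simp]
theorem dIter_zero : dIter t 0 = Set.univ := by
  rw [dIter, limitRecOn_zero]

theorem dIter_add_one (o : Ordinal.{u}) : dIter t (o + 1) = dSet t (dIter t o) := by
  rw [dIter, limitRecOn_add_one]; rfl

theorem dIter_limit {o : Ordinal.{u}} (ho : Order.IsSuccLimit o) :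
    dIter t o = ⋂ o' < o, dIter t o' := by
  rw [dIter, limitRecOn_limit _ _ _ _ ho]; rfl

theorem isClosed_dIter (o : Ordinal.{u}) : IsClosed (dIter t o) := by
  induction o using Ordinal.limitRecOn with
  | zero => simp
  | add_one o ih => rw [dIter_add_one]; exact isClosed_dSet ih
  | limit o ho ih => rw [dIter_limit ho]; exact isClosed_biInter ih

theorem dIter_anti : Antitone (dIter t) := by
  intro ξ η hξη
  induction η using Ordinal.limitRecOn with
  | zero => rw [nonpos_iff_eq_zero.mp hξη]
  | add_one η ih =>
    rcases hξη.eq_or_lt with rfl | hlt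
    · rfl
    · rw [dIter_add_one]
      exact (dSet_subset_of_isClosed (isClosed_dIter η)).trans
        (ih (Order.lt_add_one_iff.mp hlt))
  | limit η hη ih =>
    rcases hξη.eq_or_lt with rfl | hlt
    · rfl
    · rw [dIter_limit hη]
      exact biInter_subset_of_mem hlt

theorem mem_dIter_of_le_ptRank {x : X} {ξ : Ordinal.{u}} (h : ξ ≤ ptRank t x) :
    x ∈ dIter t ξ := by
  induction ξ using Ordinal.limitRecOn with
  | zero => simp
  | add_one ξ _ => exact not_not.mp (notMem_of_lt_csInf' (Order.add_one_le_iff.mp h))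
  | limit ξ hξ ih =>
    rw [dIter_limit hξ]
    exact mem_iInter₂.mpr fun ξ' hξ' => ih ξ' hξ' (hξ'.le.trans h)

theorem ptRank_lt_spRank (x : X) : ptRank t x < spRank X t :=
  (Order.lt_add_one_iff.mpr le_rfl).trans_le (Ordinal.le_iSup (fun x => ptRank t x + 1) x)

end CantorBendixson

section Scattered

variable {X : Type u} [t : TopologicalSpace X]

theorem notMem_dSet_of_inter_eq_singleton {A U : Set X} {x : X} (hU : IsOpen U)
    (hUA : U ∩ A = {x}) : x ∉ dSet t A := by
  have hx : x ∈ U ∩ A := hUA ▸ rfl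
  exact notMem_dSet_iff.mpr ⟨U, hU, hx.1, fun y hyU hyA => hUA.subset ⟨hyU, hyA⟩⟩

theorem IsScattered.exists_dIter_eq_empty (h : IsScattered t) :
    ∃ ξ : Ordinal.{u}, dIter t ξ = ∅ := by
  by_contra! hne
  have hsucc : ∀ ξ, dIter t (ξ + 1) ⊂ dIter t ξ := fun ξ => by
    refine (dIter_anti le_self_add).ssubset_of_ne fun heq => ?_
    obtain ⟨x, hx, U, hU, hUx⟩ := h _ (hne ξ)
    exact notMem_dSet_of_inter_eq_singleton hU hUx (by rwa [← dIter_add_one, heq])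
  have hanti : StrictAnti (dIter t) := fun ξ η hξη =>
    (dIter_anti (Order.add_one_le_of_lt hξη)).trans_ssubset (hsucc ξ)
  exact not_injective_of_ordinal _ hanti.injective

theorem IsScattered.notMem_dIter_ptRank_add_one (h : IsScattered t) (x : X) :
    x ∉ dIter t (ptRank t x + 1) := by
  obtain ⟨ξ, hξ⟩ := h.exists_dIter_eq_empty
  refine csInf_mem (s := {ξ | x ∉ dIter t (ξ + 1)}) ⟨ξ, fun hx => ?_⟩
  simpa [hξ] using dIter_anti le_self_add hx

theorem IsScattered.mem_dIter_iff (h : IsScattered t) {x : X} {ξ : Ordinal.{u}} :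
    x ∈ dIter t ξ ↔ ξ ≤ ptRank t x :=
  ⟨fun hx => not_lt.mp fun hlt =>
    h.notMem_dIter_ptRank_add_one x (dIter_anti (Order.add_one_le_of_lt hlt) hx),
    mem_dIter_of_le_ptRank⟩

theorem IsScattered.isOpen_setOf_ptRank_le (h : IsScattered t) (α : Ordinal.{u}) :
    IsOpen {x | ptRank t x ≤ α} := by
  have hcompl : {x | ptRank t x ≤ α} = (dIter t (α + 1))ᶜ := by
    ext x
    simp [h.mem_dIter_iff, Order.add_one_le_iff]
  rw [hcompl]
  exact (isClosed_dIter _).isOpen_compl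

theorem IsScattered.exists_isOpen_forall_ptRank_le_imp_eq (h : IsScattered t) (x : X) :
    ∃ U, IsOpen U ∧ x ∈ U ∧ ∀ y ∈ U, ptRank t x ≤ ptRank t y → y = x := by
  have hx := h.notMem_dIter_ptRank_add_one x
  rw [dIter_add_one, notMem_dSet_iff] at hx
  obtain ⟨U, hU, hxU, hUx⟩ := hx
  exact ⟨U, hU, hxU, fun y hyU hle => hUx y hyU (mem_dIter_of_le_ptRank hle)⟩

theorem IsScattered.exists_mem_ptRank_eq (h : IsScattered t) {U : Set X} (hU : IsOpen U)
    {x : X} (hx : x ∈ U) {β : Ordinal.{u}} (hβ : β ≤ ptRank t x) :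
    ∃ y ∈ U, ptRank t y = β := by
  obtain ⟨y, ⟨hyU, hyβ⟩, V, hV, hVy⟩ := h (U ∩ dIter t β) ⟨x, hx, mem_dIter_of_le_ptRank hβ⟩
  have hy : y ∉ dIter t (β + 1) := by
    rw [dIter_add_one]
    exact notMem_dSet_of_inter_eq_singleton (IsOpen.inter hV hU) (by rwa [inter_assoc])
  rw [h.mem_dIter_iff, Order.add_one_le_iff, not_lt] at hy
  exact ⟨y, hyU, hy.antisymm (h.mem_dIter_iff.mp hyβ)⟩

end Scattered

section LeftTopology

variable {Θ : Ordinal.{u}}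

theorem ordVal_strictMono : StrictMono (ordVal (Θ := Θ)) :=
  fun _ _ h => (typein_lt_typein _).mpr h

theorem ordVal_toTypeMk (a : Set.Iio Θ) : ordVal (ToType.mk a) = a :=
  typein_enum _ _

theorem isOpen_leftTop_iff {S : Set Θ.ToType} : IsOpen[leftTop Θ] S ↔ IsLowerSet S := by
  refine ⟨fun hS => ?_, fun hS => ?_⟩
  · induction (hS : TopologicalSpace.GenerateOpen _ S) with
    | basic _ hb => obtain ⟨b, rfl⟩ := hb; exact isLowerSet_Iic b
    | univ => exact isLowerSet_univ
    | inter _ _ _ _ h₁ h₂ => exact h₁.inter h₂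
    | sUnion _ _ ih => exact isLowerSet_sUnion ih
  · have hS' : S = ⋃ x ∈ S, Iic x :=
      Subset.antisymm (fun x hx => mem_biUnion hx self_mem_Iic)
        (iUnion₂_subset fun x hx _ hy => hS hy hx)
    rw [hS']
    exact @isOpen_biUnion _ _ (leftTop Θ) _ _ fun x _ =>
      TopologicalSpace.GenerateOpen.basic _ ⟨x, rfl⟩

theorem mem_dSet_leftTop_iff {A : Set Θ.ToType} {x : Θ.ToType} :
    x ∈ dSet (leftTop Θ) A ↔ ∃ y < x, y ∈ A := by
  refine ⟨fun hx => ?_, fun ⟨y, hyx, hyA⟩ U hU hxU =>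
    ⟨y, ⟨isOpen_leftTop_iff.mp hU hyx.le hxU, hyA⟩, hyx.ne⟩⟩
  obtain ⟨y, ⟨hyx, hyA⟩, hne⟩ :=
    hx (Iic x) (TopologicalSpace.GenerateOpen.basic _ ⟨x, rfl⟩) self_mem_Iic
  exact ⟨y, lt_of_le_of_ne hyx hne, hyA⟩

theorem dIter_leftTop (ξ : Ordinal.{u}) : dIter (leftTop Θ) ξ = {x | ξ ≤ ordVal x} := by
  induction ξ using Ordinal.limitRecOn with
  | zero => ext; simp [dIter_zero (t := leftTop Θ)]
  | add_one ξ ih =>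
    ext x
    rw [dIter_add_one (t := leftTop Θ), mem_dSet_leftTop_iff, ih, mem_ofPred_eq,
      Order.add_one_le_iff]
    refine ⟨fun ⟨y, hyx, hy⟩ => hy.trans_lt (ordVal_strictMono hyx), fun hx =>
      ⟨ToType.mk ⟨ξ, hx.trans (typein_lt_self x)⟩, ?_, (ordVal_toTypeMk _).ge⟩⟩
    rw [← ordVal_strictMono.lt_iff_lt, ordVal_toTypeMk]
    exact hx
  | limit ξ hξ ih =>
    ext x
    rw [dIter_limit (t := leftTop Θ) hξ, mem_iInter₂, mem_ofPred_eq, hξ.le_iff_forall_le]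
    exact forall₂_congr fun ξ' hξ' => by rw [ih ξ' hξ', mem_ofPred_eq]

theorem ptRank_leftTop (x : Θ.ToType) : ptRank (leftTop Θ) x = ordVal x := by
  simp_rw [ptRank, dIter_leftTop, mem_ofPred_eq, Order.add_one_le_iff, not_lt]
  exact csInf_Ici

end LeftTopology

section DMap

variable {X Y : Type u} {t : TopologicalSpace X} {s : TopologicalSpace Y} {f : X → Y}

theorem IsDMap.preimage_dSet (hf : IsDMap t s f) (A : Set Y) :
    f ⁻¹' dSet s A = dSet t (f ⁻¹' A) := by
  obtain ⟨hcont, hopen, hdisc⟩ := hf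
  ext x
  refine ⟨fun hx U hU hxU => ?_, fun hx V hV hxV => ?_⟩
  · obtain ⟨_, ⟨⟨y, hyU, rfl⟩, hyA⟩, hyx⟩ := hx (f '' U) (hopen U hU) ⟨x, hxU, rfl⟩
    exact ⟨y, ⟨hyU, hyA⟩, fun h => hyx (h ▸ rfl)⟩
  · obtain ⟨W, hW, hxW, hWx⟩ := hdisc (f x) x rfl
    obtain ⟨y, ⟨⟨hyW, hyV⟩, hyA⟩, hyx⟩ :=
      hx (W ∩ f ⁻¹' V) (t.isOpen_inter _ _ hW (hcont.isOpen_preimage V hV)) ⟨hxW, hxV⟩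
    exact ⟨f y, ⟨hyV, hyA⟩, fun h => hyx (hWx y hyW h)⟩

theorem IsDMap.preimage_dIter (hf : IsDMap t s f) (ξ : Ordinal.{u}) :
    f ⁻¹' dIter s ξ = dIter t ξ := by
  induction ξ using Ordinal.limitRecOn with
  | zero => rw [dIter_zero (t := s), dIter_zero (t := t), preimage_univ]
  | add_one ξ ih =>
    rw [dIter_add_one (t := s), dIter_add_one (t := t), hf.preimage_dSet, ih]
  | limit ξ hξ ih =>
    rw [dIter_limit (t := s) hξ, dIter_limit (t := t) hξ, preimage_iInter₂]
    exact iInter₂_congr ih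

theorem IsDMap.ptRank_apply (hf : IsDMap t s f) (x : X) : ptRank s (f x) = ptRank t x := by
  unfold ptRank
  congr! 3 with ξ
  rw [← hf.preimage_dIter]
  rfl

end DMap

theorem IsDMap.ordVal_apply_eq_ptRank {X : Type u} {t : TopologicalSpace X} {Θ : Ordinal.{u}}
    {f : X → Θ.ToType} (hf : IsDMap t (leftTop Θ) f) (x : X) : ordVal (f x) = ptRank t x := by
  rw [← ptRank_leftTop, hf.ptRank_apply]

theorem IsScattered.isDMap_leftTop {X : Type u} [t : TopologicalSpace X] (h : IsScattered t)
    {Θ : Ordinal.{u}} {f : X → Θ.ToType} (hf : ∀ x, ordVal (f x) = ptRank t x) :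
    IsDMap t (leftTop Θ) f := by
  have hle : ∀ x y, f x ≤ f y ↔ ptRank t x ≤ ptRank t y := fun x y => by
    rw [← ordVal_strictMono.le_iff_le, hf, hf]
  refine ⟨continuous_generateFrom_iff.mpr ?_, fun U hU => ?_, fun _ x hx => ?_⟩
  · rintro _ ⟨b, rfl⟩
    exact isOpen_iff_forall_mem_open.mpr fun x hx =>
      ⟨_, fun y hy => ((hle y x).mpr hy).trans hx, h.isOpen_setOf_ptRank_le (ptRank t x),
        le_refl (ptRank t x)⟩
  · refine isOpen_leftTop_iff.mpr ?_
    rintro _ b hb ⟨x, hxU, rfl⟩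
    obtain ⟨y, hyU, hy⟩ := h.exists_mem_ptRank_eq hU hxU
      ((ordVal_strictMono.le_iff_le.mpr hb).trans_eq (hf x))
    exact ⟨y, hyU, ordVal_strictMono.injective (by rw [hf, hy])⟩
  · obtain ⟨U, hU, hxU, hUx⟩ := h.exists_isOpen_forall_ptRank_le_imp_eq x
    exact ⟨U, hU, hxU, fun z hzU hz => hUx z hzU ((hle x z).mp (hz.trans hx.symm).ge)⟩

/-- For a scattered space `(X, τ)` and any ordinal `Θ ≥ ρX`, the rank
function is the unique d-map from `(X, τ)` to `Θ₀` (the ordinal `Θ` with the left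
topology): there is exactly one d-map, and any d-map computes the rank. -/
theorem rank_unique_dMap_to_leftTop {X : Type u} (t : TopologicalSpace X)
    (hscat : IsScattered t) (Θ : Ordinal.{u}) (hΘ : spRank X t ≤ Θ) :
    (∃! f : X → Θ.ToType, IsDMap t (leftTop Θ) f) ∧
      ∀ f : X → Θ.ToType, IsDMap t (leftTop Θ) f → ∀ x : X, ordVal (f x) = ptRank t x := by
  let r : X → Θ.ToType := fun x => ToType.mk ⟨ptRank t x, (ptRank_lt_spRank x).trans_le hΘ⟩
  have hr : ∀ x, ordVal (r x) = ptRank t x := fun x => ordVal_toTypeMk _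
  refine ⟨⟨r, hscat.isDMap_leftTop hr, fun g hg => funext fun x => ?_⟩,
    fun f hf => hf.ordVal_apply_eq_ptRank⟩
  exact ordVal_strictMono.injective ((hg.ordVal_apply_eq_ptRank x).trans (hr x).symm)

end
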